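/- With $K = \frac{q}{2}\binom{k-t+1}{1}_q\binom{k-t}{1}_q$, $F = \binom{k-t+1}{m+1}_q \frac{\prod_{i=0}^{m}(q^{m+1}-q^i)}{(m+1)!(q-1)^{m+1}}$, $D = \frac{1}{(m+1)!} q^{\frac{(m+1)(m+4)}{2}}\prod_{i=1}^{m+1}\binom{k-t-i}{1}_q$, and $c = \frac{q^{2m+3}}{2}\binom{k-m-t}{1}_q\binom{k-m-t-1}{1}_q$, the identity $K \cdot D = F \cdot c$ holds. -/

import Mathlib

/-- The Gaussian (q-)binomial coefficient, as a rational number. -/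
def gbinomQ (q a b : ℕ) : ℚ :=
  ∏ i ∈ Finset.range b, (((q : ℚ) ^ (a - i) - 1) / ((q : ℚ) ^ (b - i) - 1))

/-!
Write `[j] = q^j - 1`. Clearing the denominators `q - 1`, the factor
`∏_{i ≤ m} (q^{m+1} - q^i) = q^{m(m+1)/2} ∏_{i ≤ m} [m+1-i]` of `F` cancels the denominator of
the Gaussian binomial, so both `K·D` and `F·c` become `q^{m(m+1)/2 + 2m+3} / (2 (m+1)!)` times the
product of the `m + 3` consecutive factors `[n+1], [n], …, [n-m-1]`, where `n = k - t`.
-/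

open Finset

lemma gbinomQ_one (q a : ℕ) : gbinomQ q a 1 = ((q : ℚ) ^ a - 1) / ((q : ℚ) - 1) := by
  simp [gbinomQ]

lemma prod_range_pow_sub_pow {R : Type*} [CommRing R] (x : R) (b : ℕ) :
    ∏ i ∈ range b, (x ^ b - x ^ i) = x ^ (b * (b - 1) / 2) * ∏ i ∈ range b, (x ^ (b - i) - 1) := by
  have hfactor : ∀ i ∈ range b, x ^ b - x ^ i = x ^ i * (x ^ (b - i) - 1) := fun i hi => by
    rw [mul_sub, mul_one, ← pow_add, Nat.add_sub_cancel' (mem_range.1 hi).le]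
  rw [prod_congr rfl hfactor, prod_mul_distrib, prod_pow_eq_pow_sum, sum_range_id]

lemma gbinomQ_mul_prod_pow_sub_pow {q : ℕ} (hq : q ≠ 1) (a b : ℕ) :
    gbinomQ q a b * ∏ i ∈ range b, ((q : ℚ) ^ b - (q : ℚ) ^ i) =
      (q : ℚ) ^ (b * (b - 1) / 2) * ∏ i ∈ range b, ((q : ℚ) ^ (a - i) - 1) := by
  have hden : ∏ i ∈ range b, ((q : ℚ) ^ (b - i) - 1) ≠ 0 := prod_ne_zero_iff.2 fun i hi => by
    rw [sub_ne_zero]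
    exact_mod_cast fun h => (Nat.pow_eq_one.1 h).elim hq (Nat.sub_ne_zero_of_lt (mem_range.1 hi))
  rw [gbinomQ, prod_div_distrib, prod_range_pow_sub_pow]
  field_simp

lemma prod_range_sub_mul_mul {M : Type*} [CommMonoid M] (f : ℕ → M) (n r : ℕ) :
    (∏ i ∈ range r, f (n + 1 - i)) * (f (n + 1 - r) * f (n - r)) =
      f (n + 1) * f n * ∏ i ∈ range r, f (n - (i + 1)) := by
  calc _ = ∏ i ∈ range (r + 2), f (n + 1 - i) := by
        rw [prod_range_succ, prod_range_succ, Nat.add_sub_add_right, mul_assoc]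
    _ = _ := by
        rw [prod_range_succ', prod_range_succ']
        simp only [Nat.add_sub_add_right, Nat.add_sub_cancel, Nat.sub_zero]
        ac_rfl

theorem stmt_9_general (q k m t : ℕ) (hq : IsPrimePow q)
    (K F D c : ℚ)
    (hK : K = (q : ℚ) / 2 * (gbinomQ q (k - t + 1) 1 * gbinomQ q (k - t) 1))
    (hF : F = gbinomQ q (k - t + 1) (m + 1) *
      ((∏ i ∈ Finset.range (m + 1), ((q : ℚ) ^ (m + 1) - (q : ℚ) ^ i)) /
        ((Nat.factorial (m + 1) : ℚ) * ((q : ℚ) - 1) ^ (m + 1))))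
    (hD : D = (1 / (Nat.factorial (m + 1) : ℚ)) *
      (q : ℚ) ^ ((m + 1) * (m + 4) / 2) *
      ∏ i ∈ Finset.range (m + 1), gbinomQ q (k - t - (i + 1)) 1)
    (hc : c = (q : ℚ) ^ (2 * m + 3) / 2 *
      (gbinomQ q (k - m - t) 1 * gbinomQ q (k - m - t - 1) 1)) :
    K * D = F * c := by
  subst hK hF hD hc
  have hq1 : (q : ℚ) - 1 ≠ 0 := sub_ne_zero.2 (by exact_mod_cast hq.one_lt.ne')
  have hpow : (q : ℚ) * (q : ℚ) ^ ((m + 1) * (m + 4) / 2) =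
      (q : ℚ) ^ ((m + 1) * m / 2) * (q : ℚ) ^ (2 * m + 3) := by
    rw [← pow_succ', ← pow_add]
    congr 1
    rw [show (m + 1) * (m + 4) = (m + 1) * m + (2 * m + 2) * 2 by ring,
      Nat.add_mul_div_right _ _ two_pos]
    ring
  have hprod := prod_range_sub_mul_mul (fun j => (q : ℚ) ^ j - 1) (k - t) (m + 1)
  rw [show k - m - t = k - t + 1 - (m + 1) by omega,
    show k - t + 1 - (m + 1) - 1 = k - t - (m + 1) by omega]
  simp only [gbinomQ_one, prod_div_distrib, prod_const, card_range, mul_div_assoc',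
    gbinomQ_mul_prod_pow_sub_pow hq.one_lt.ne', Nat.add_sub_cancel] at hprod ⊢
  field_simp
  linear_combination ((q : ℚ) ^ (k - t + 1) - 1) * ((q : ℚ) ^ (k - t) - 1) *
      (∏ i ∈ range (m + 1), ((q : ℚ) ^ (k - t - (i + 1)) - 1)) * hpow -
    (q : ℚ) ^ ((m + 1) * m / 2) * (q : ℚ) ^ (2 * m + 3) * hprod

/-- With `K = (q/2)[k-t+1,1]_q[k-t,1]_q`,
`F = [k-t+1, m+1]_q ∏_{i=0}^m (q^{m+1}-q^i) / ((m+1)!(q-1)^{m+1})`,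
`D = (1/(m+1)!) q^{(m+1)(m+4)/2} ∏_{i=1}^{m+1}[k-t-i,1]_q`, and
`c = (q^{2m+3}/2)[k-m-t,1]_q[k-m-t-1,1]_q`, the identity `K·D = F·c` holds. -/
theorem stmt_9 (q k m t : ℕ) (hq : IsPrimePow q) (hm : 1 ≤ m) (ht : 1 ≤ t)
    (hk : m + t + 2 ≤ k)
    (K F D c : ℚ)
    (hK : K = (q : ℚ) / 2 * (gbinomQ q (k - t + 1) 1 * gbinomQ q (k - t) 1))
    (hF : F = gbinomQ q (k - t + 1) (m + 1) *
      ((∏ i ∈ Finset.range (m + 1), ((q : ℚ) ^ (m + 1) - (q : ℚ) ^ i)) /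
        ((Nat.factorial (m + 1) : ℚ) * ((q : ℚ) - 1) ^ (m + 1))))
    (hD : D = (1 / (Nat.factorial (m + 1) : ℚ)) *
      (q : ℚ) ^ ((m + 1) * (m + 4) / 2) *
      ∏ i ∈ Finset.range (m + 1), gbinomQ q (k - t - (i + 1)) 1)
    (hc : c = (q : ℚ) ^ (2 * m + 3) / 2 *
      (gbinomQ q (k - m - t) 1 * gbinomQ q (k - m - t - 1) 1)) :
    K * D = F * c :=
  stmt_9_general q k m t hq K F D c hK hF hD hc
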